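/- arXiv:2406.06733 — 3 statements merged into one kernel-verified Lean document; each statement's English description precedes it below -/
import Mathlib

section
/- Let h : ℝ² → ℝ² be linear with ω(a, h(ã)) = ω(ã, h(a)) for all a, ã, and ω(a, h(a)) > 0 for all a ≠ 0, where ω(a,ã) = a₁ã₂ - a₂ã₁. Suppose the bilinear form B(a, ã) := ω(a, ã) - ω(h(a), h(ã)) is degenerate on ℝ². Then h ∘ h = -Id. -/
theorem stmt4 (ω : (ℝ × ℝ) → (ℝ × ℝ) → ℝ)
    (hω : ∀ a b : ℝ × ℝ, ω a b = a.1 * b.2 - a.2 * b.1)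
    (h : (ℝ × ℝ) →ₗ[ℝ] (ℝ × ℝ))
    (hsym : ∀ a b : ℝ × ℝ, ω a (h b) = ω b (h a))
    (hpos : ∀ a : ℝ × ℝ, a ≠ 0 → 0 < ω a (h a))
    (B : (ℝ × ℝ) → (ℝ × ℝ) → ℝ)
    (hB : ∀ a b : ℝ × ℝ, B a b = ω a b - ω (h a) (h b))
    (hdeg : ∃ a : ℝ × ℝ, a ≠ 0 ∧ ∀ b : ℝ × ℝ, B a b = 0) :
    ∀ a : ℝ × ℝ, h (h a) = -a := by
  set p := (h (1,0)).1 with hp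
  set q := (h (1,0)).2 with hq
  set r := (h (0,1)).1 with hr
  set s := (h (0,1)).2 with hs
  have hrep : ∀ x : ℝ × ℝ, h x = (x.1 * p + x.2 * r, x.1 * q + x.2 * s) := by
    intro x
    have hx : x = x.1 • ((1:ℝ),(0:ℝ)) + x.2 • ((0:ℝ),(1:ℝ)) := by
      ext <;> simp
    rw [hx, map_add, map_smul, map_smul]
    ext <;> simp [hp, hq, hr, hs]
  -- s = -p
  have hsp : s = -p := by
    have := hsym (1,0) (0,1)
    rw [hω, hω] at this
    simp [hp, hs] at this
    linarith [this]
  obtain ⟨a, ha, hab⟩ := hdeg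
  have h1 := hab (1,0)
  have h2 := hab (0,1)
  simp only [hB, hω, hrep] at h1 h2
  have hane : a.1 ≠ 0 ∨ a.2 ≠ 0 := by
    by_contra hc
    push_neg at hc
    exact ha (Prod.ext hc.1 hc.2)
  have hdet : p * s - q * r = 1 := by
    rcases hane with h0 | h0
    · have : a.1 * (1 - (p * s - q * r)) = 0 := by ring_nf; ring_nf at h2; linarith
      have := mul_eq_zero.mp this
      rcases this with h' | h'
      · exact absurd h' h0
      · linarith
    · have : a.2 * (1 - (p * s - q * r)) = 0 := by ring_nf; ring_nf at h1; linarith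
      have := mul_eq_zero.mp this
      rcases this with h' | h'
      · exact absurd h' h0
      · linarith
  intro x
  rw [hrep x, hrep _]
  ext
  · show (x.1 * p + x.2 * r) * p + (x.1 * q + x.2 * s) * r = -x.1
    rw [hsp] at hdet ⊢
    linear_combination (-x.1) * hdet
  · show (x.1 * p + x.2 * r) * q + (x.1 * q + x.2 * s) * s = -x.2
    rw [hsp] at hdet ⊢
    linear_combination (-x.2) * hdet
end

section
/- Let h, g : ℝ² → ℝ² be linear maps such that ω(a, h(a)) > 0 for every nonzero a, ω is the standard symplectic form ω(a,ã) = a₁ã₂ - a₂ã₁, g is an ω-compatible complex structure (g² = -Id and ω(g(a), g(ã)) = ω(a, ã) with ω(a, g(a)) > 0 for a ≠ 0), h is injective, and for every nonzero a one has ω(a, h(a)) > ω(h(a), g(h(a))). Then for every nonzero a, the norm ‖a‖ := √(ω(a, g(a))) satisfies ‖a‖ > ‖h(a)‖. -/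
theorem stmt5 (ω : (ℝ × ℝ) → (ℝ × ℝ) → ℝ)
    (hω : ∀ a b : ℝ × ℝ, ω a b = a.1 * b.2 - a.2 * b.1)
    (h g : (ℝ × ℝ) →ₗ[ℝ] (ℝ × ℝ))
    (hg2 : ∀ a : ℝ × ℝ, g (g a) = -a)
    (hgω : ∀ a b : ℝ × ℝ, ω (g a) (g b) = ω a b)
    (hgpos : ∀ a : ℝ × ℝ, a ≠ 0 → 0 < ω a (g a))
    (hinj : Function.Injective h)
    (hhpos : ∀ a : ℝ × ℝ, a ≠ 0 → 0 < ω a (h a))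
    (hineq : ∀ a : ℝ × ℝ, a ≠ 0 → ω (h a) (g (h a)) < ω a (h a)) :
    ∀ a : ℝ × ℝ, a ≠ 0 → Real.sqrt (ω (h a) (g (h a))) < Real.sqrt (ω a (g a)) := by
  -- matrix entries of g
  set p : ℝ := (g (1,0)).1 with hp
  set q : ℝ := (g (1,0)).2 with hq
  set r : ℝ := (g (0,1)).1 with hr
  set s : ℝ := (g (0,1)).2 with hs
  have hgx : ∀ x : ℝ × ℝ, g x = (p * x.1 + r * x.2, q * x.1 + s * x.2) := by
    intro x
    have hx : x = x.1 • ((1:ℝ),(0:ℝ)) + x.2 • ((0:ℝ),(1:ℝ)) := by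
      simp [Prod.ext_iff]
    calc g x = g (x.1 • ((1:ℝ),(0:ℝ)) + x.2 • ((0:ℝ),(1:ℝ))) := by rw [← hx]
    _ = x.1 • g (1,0) + x.2 • g (0,1) := by rw [map_add, map_smul, map_smul]
    _ = (p * x.1 + r * x.2, q * x.1 + s * x.2) := by
        simp [Prod.ext_iff, hp, hq, hr, hs]; constructor <;> ring
  have hqpos : 0 < q := by
    have := hgpos ((1:ℝ),(0:ℝ)) (by simp [Prod.ext_iff])
    rw [hω] at this
    simpa [hq] using this
  have hsp : s = -p := by
    have := hg2 ((1:ℝ),(0:ℝ))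
    rw [hgx, hgx] at this
    simp [Prod.ext_iff] at this
    have h2 := this.2
    have hq0 : q * (p + s) = 0 := by nlinarith [h2]
    rcases mul_eq_zero.mp hq0 with h' | h'
    · exact absurd h' (ne_of_gt hqpos)
    · linarith
  have hdet : p ^ 2 + q * r = -1 := by
    have := hg2 ((1:ℝ),(0:ℝ))
    rw [hgx, hgx] at this
    simp [Prod.ext_iff] at this
    nlinarith [this.1]
  -- the quadratic form
  have hQ : ∀ x : ℝ × ℝ, q * ω x (g x) = (q * x.1 - p * x.2) ^ 2 + x.2 ^ 2 := by
    intro x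
    rw [hω, hgx, hsp]; dsimp
    linear_combination (-x.2 ^ 2) * hdet
  intro a ha
  have hb : h a ≠ 0 := by
    intro hba
    exact ha (hinj (by simpa using hba))
  set b : ℝ × ℝ := h a with hbdef
  have hA : 0 < ω a (g a) := hgpos a ha
  have hB : 0 < ω b (g b) := hgpos b hb
  have hC : 0 < ω a b := hhpos a ha
  have hBC : ω b (g b) < ω a b := hineq a ha
  -- Cauchy–Schwarz: (ω a b)^2 ≤ ω a (g a) * ω b (g b)
  set uA : ℝ := q * a.1 - p * a.2 with huA
  set uB : ℝ := q * b.1 - p * b.2 with huB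
  have hQa := hQ a
  have hQb := hQ b
  have eC : q * ω a b = uA * b.2 - a.2 * uB := by
    rw [hω, huA, huB]; ring
  have e1 : (q * ω a (g a)) * (q * ω b (g b)) =
      (q * ω a b) ^ 2 + (uA * uB + a.2 * b.2) ^ 2 := by
    rw [hQa, hQb, eC]; ring
  have hCS : (ω a b) ^ 2 ≤ ω a (g a) * ω b (g b) := by
    nlinarith [e1, sq_nonneg (uA * uB + a.2 * b.2), mul_pos hqpos hqpos]
  have hmain : ω b (g b) < ω a (g a) := by
    have h1 : ω b (g b) * ω b (g b) < ω a b * ω a b :=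
      mul_self_lt_mul_self hB.le hBC
    have h2 : ω a b * ω a b ≤ ω a (g a) * ω b (g b) := by nlinarith [hCS]
    exact lt_of_mul_lt_mul_right (lt_of_lt_of_le h1 h2) hB.le
  exact Real.sqrt_lt_sqrt hB.le hmain
end

section
/- Let d : ℂ → ℂ be a holomorphic function with d' never zero, satisfying d(z + 1) = α₁ d(z) + β₁ and d(z + τ) = α₂ d(z) + β₂ for fixed τ ∈ ℍ and constants α₁, α₂ ∈ ℂ*, β₁, β₂ ∈ ℂ. Then d''/d' is constant, i.e., there exists c ∈ ℂ with d''(z) = c·d'(z) for all z. -/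
open Complex Set Bornology

theorem stmt10 (d : ℂ → ℂ) (hd : Differentiable ℂ d)
    (hd' : ∀ z : ℂ, deriv d z ≠ 0)
    (τ : ℂ) (hτ : 0 < τ.im)
    (α₁ α₂ : ℂ) (hα₁ : α₁ ≠ 0) (hα₂ : α₂ ≠ 0) (β₁ β₂ : ℂ)
    (h₁ : ∀ z : ℂ, d (z + 1) = α₁ * d z + β₁)
    (h₂ : ∀ z : ℂ, d (z + τ) = α₂ * d z + β₂) :
    ∃ c : ℂ, ∀ z : ℂ, deriv (deriv d) z = c * deriv d z := by
  -- analyticity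
  have han : AnalyticOnNhd ℂ d univ := fun z _ => hd.analyticAt z
  have han1 : AnalyticOnNhd ℂ (deriv d) univ := han.deriv
  have han2 : AnalyticOnNhd ℂ (deriv (deriv d)) univ := han1.deriv
  have hd1 : Differentiable ℂ (deriv d) := by
    rw [← differentiableOn_univ]; exact han1.differentiableOn
  have hd2 : Differentiable ℂ (deriv (deriv d)) := by
    rw [← differentiableOn_univ]; exact han2.differentiableOn
  -- periodicity of derivatives
  have key : ∀ (α β : ℂ), α ≠ 0 → ∀ (p : ℂ), (∀ z, d (z + p) = α * d z + β) →
      (∀ z, deriv d (z + p) = α * deriv d z) ∧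
      (∀ z, deriv (deriv d) (z + p) = α * deriv (deriv d) z) := by
    intro α β hα p hp
    have e1 : ∀ z, deriv d (z + p) = α * deriv d z := by
      intro z
      have : deriv (fun x => d (x + p)) z = deriv (fun x => α * d x + β) z := by
        congr 1; funext x; exact hp x
      rw [deriv_comp_add_const] at this
      rw [this, deriv_add_const, deriv_const_mul _ (hd.differentiableAt)]
    refine ⟨e1, fun z => ?_⟩
    have : deriv (fun x => deriv d (x + p)) z = deriv (fun x => α * deriv d x) z := by
      congr 1; funext x; exact e1 x
    rw [deriv_comp_add_const] at this
    rw [this, deriv_const_mul _ (hd1.differentiableAt)]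
  obtain ⟨e11, e12⟩ := key α₁ β₁ hα₁ 1 h₁
  obtain ⟨e21, e22⟩ := key α₂ β₂ hα₂ τ h₂
  -- the quotient
  set f : ℂ → ℂ := fun z => deriv (deriv d) z / deriv d z with hf
  have hfd : Differentiable ℂ f := hd2.div hd1 hd'
  have hper1 : Function.Periodic f 1 := by
    intro z; simp only [hf, e11, e12, mul_div_mul_left _ _ hα₁]
  have hper2 : Function.Periodic f τ := by
    intro z; simp only [hf, e21, e22, mul_div_mul_left _ _ hα₂]
  -- boundedness: every value is attained on a compact fundamental domain
  have hτ0 : τ.im ≠ 0 := ne_of_gt hτ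
  set K : Set ℂ := (fun p : ℝ × ℝ => (p.1 : ℂ) + (p.2 : ℂ) * τ) '' (Icc 0 1 ×ˢ Icc 0 1)
    with hK
  have hKc : IsCompact K :=
    ((isCompact_Icc.prod isCompact_Icc).image (by fun_prop))
  have hsub : range f ⊆ f '' K := by
    rintro _ ⟨z, rfl⟩
    set b : ℝ := z.im / τ.im with hb
    set a : ℝ := z.re - b * τ.re with ha
    have hz : z = (a : ℂ) + (b : ℂ) * τ := by
      apply Complex.ext <;> simp [ha, hb, div_mul_cancel₀ _ hτ0]
    set fa : ℝ := Int.fract a with hfa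
    set fb : ℝ := Int.fract b with hfb
    set w : ℂ := (fa : ℂ) + (fb : ℂ) * τ with hw
    refine ⟨w, ⟨(fa, fb), ⟨⟨Int.fract_nonneg a, (Int.fract_lt_one a).le⟩,
      ⟨Int.fract_nonneg b, (Int.fract_lt_one b).le⟩⟩, hw.symm⟩, ?_⟩
    have hzw : z = w + ((⌊a⌋ : ℂ) * 1 + (⌊b⌋ : ℂ) * τ) := by
      have h1 : (a : ℂ) = (fa : ℂ) + (⌊a⌋ : ℂ) := by
        rw [hfa, ← Int.self_sub_floor]; push_cast; ring
      have h2 : (b : ℂ) = (fb : ℂ) + (⌊b⌋ : ℂ) := by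
        rw [hfb, ← Int.self_sub_floor]; push_cast; ring
      rw [hz, hw, h1, h2]; ring
    have p1 : Function.Periodic f ((⌊a⌋ : ℂ) * 1) := hper1.int_mul ⌊a⌋
    have p2 : Function.Periodic f ((⌊b⌋ : ℂ) * τ) := hper2.int_mul ⌊b⌋
    calc f w = f (w + (⌊a⌋ : ℂ) * 1) := (p1 w).symm
      _ = f (w + (⌊a⌋ : ℂ) * 1 + (⌊b⌋ : ℂ) * τ) := (p2 _).symm
      _ = f z := by rw [hzw]; ring_nf
  have hbdd : IsBounded (range f) :=
    ((hKc.image hfd.continuous).isBounded).subset hsub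
  refine ⟨f 0, fun z => ?_⟩
  have h := hfd.apply_eq_apply_of_bounded hbdd z 0
  simp only [hf] at h
  rw [div_eq_div_iff (hd' z) (hd' 0)] at h
  show deriv (deriv d) z = deriv (deriv d) 0 / deriv d 0 * deriv d z
  rw [div_mul_eq_mul_div, eq_div_iff (hd' 0)]
  linear_combination h
end
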